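/- An object F of fp(C, Ab) is projective if and only if it is representable, if and only if it is left exact. -/

import Mathlib

open CategoryTheory CategoryTheory.Limits Opposite

universe v u

variable (C : Type u) [Category.{v} C] [Abelian C]

/-- A functor `F : C ⥤ Ab` is coherent (finitely presented) if it admits a presentation
`Hom(Y,-) → Hom(X,-) → F → 0`; by the Yoneda lemma the first map is induced by some
`f : X ⟶ Y`. -/
def IsCoherent (F : C ⥤ AddCommGrpCat.{v}) : Prop :=
  ∃ (X Y : C) (f : X ⟶ Y) (α : preadditiveCoyoneda.obj (op X) ⟶ F)
    (w : preadditiveCoyoneda.map f.op ≫ α = 0),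
    Epi α ∧ (ShortComplex.mk (preadditiveCoyoneda.map f.op) α w).Exact

/-- The category `fp(C, Ab)` of coherent functors, as a full subcategory of `(C, Ab)`. -/
abbrev Fp := ObjectProperty.FullSubcategory (IsCoherent C)

/-!
A coherent functor is the same as an additive functor `G` generated by one element
`ξ ∈ G(X)` whose annihilator `{m : X ⟶ T | G(m) ξ = 0}` is generated by one morphism
`f : X ⟶ Y`.

Since `fp(C, Ab)` is closed under cokernels, its epimorphisms are pointwise surjective, and the
additive Yoneda lemma makes representable functors projective in `fp(C, Ab)`. Conversely, a
projective `F` is a retract of the representable functor presenting it; by Yoneda the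
retraction comes from an idempotent of `X`, which splits because `C` is abelian. Representable
functors are left exact. Finally, if `G` is left exact, then `ξ` lifts to `η ∈ G(ker f)`, and
`η` induces `Hom(ker f, -) ≅ G`: onto because `ξ` generates, and one-to-one because if
`a : ker f ⟶ T` kills `η`, then in the pushout of `a` along the mono `ker f ⟶ X` the leg
`X ⟶ P` kills `ξ`, hence factors through `f`, which forces `a` to vanish as the leg `T ⟶ P`
is mono.
-/

namespace CategoryTheory

variable {C : Type u} [Category.{v} C]

lemma NatTrans.app_surjective_of_epi {J : Type*} [Category J] {G H : J ⥤ AddCommGrpCat.{v}}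
    (e : G ⟶ H) [Epi e] (T : J) : Function.Surjective (e.app T) :=
  (AddCommGrpCat.epi_iff_surjective _).1 inferInstance

lemma ShortComplex.functor_ab_exact_iff {J : Type*} [Category J]
    (S : ShortComplex (J ⥤ AddCommGrpCat.{v})) :
    S.Exact ↔ ∀ (T : J) (y : S.X₂.obj T), S.g.app T y = 0 → ∃ x, S.f.app T x = y := by
  refine ⟨fun h T => (ShortComplex.ab_exact_iff _).1 (h.map ((evaluation J _).obj T)),
    fun h => ?_⟩
  rw [S.exact_iff_isZero_homology]
  refine Functor.isZero _ fun T => ?_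
  have hT := (ShortComplex.ab_exact_iff (S.map ((evaluation J _).obj T))).2 (h T)
  exact (S.map _).exact_iff_isZero_homology.1 hT
    |>.of_iso (S.mapHomologyIso ((evaluation J _).obj T)).symm

lemma Functor.additive_of_epi {D : Type*} [Category D] [Preadditive C] [Preadditive D]
    [HasPushouts D] {G H : C ⥤ D} [H.Additive] (α : H ⟶ G) [Epi α] : G.Additive where
  map_add {X Y f g} := by
    rw [← cancel_epi (α.app X), Preadditive.comp_add, ← α.naturality, ← α.naturality,
      ← α.naturality, H.map_add, Preadditive.add_comp]

lemma Functor.exists_iso_obj_of_retract {D E : Type*} [Category D] [Category E]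
    [IsIdempotentComplete D] (L : D ⥤ E) [L.Full] [L.Faithful] {R : E} {X : D}
    (h : Retract R (L.obj X)) : ∃ W, Nonempty (R ≅ L.obj W) := by
  obtain ⟨W, i, p, hip, hpi⟩ := IsIdempotentComplete.idempotents_split X
    (L.preimage (h.r ≫ h.i)) (L.map_injective (by simp))
  have hpi' : L.map p ≫ L.map i = h.r ≫ h.i := by rw [← L.map_comp, hpi, L.map_preimage]
  refine ⟨W, ⟨⟨h.i ≫ L.map p, L.map i ≫ h.r, ?_, ?_⟩⟩⟩
  · simp [reassoc_of% hpi']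
  · rw [Category.assoc, ← reassoc_of% hpi', ← L.map_comp, ← L.map_comp, ← L.map_comp,
      reassoc_of% hip, hip, L.map_id]

section Preadditive

variable [Preadditive C]

@[simp]
lemma preadditiveCoyoneda_obj_map_apply {W T T' : C} (u : T ⟶ T') (a : W ⟶ T) :
    (preadditiveCoyoneda.obj (op W)).map u a = a ≫ u := rfl

lemma preadditiveCoyoneda_hom_app {M : C ⥤ AddCommGrpCat.{v}} {W : C}
    (σ : preadditiveCoyoneda.obj (op W) ⟶ M) {T : C} (a : W ⟶ T) :
    σ.app T a = M.map a (σ.app W (𝟙 W)) := by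
  simpa using NatTrans.naturality_apply σ a (𝟙 W : W ⟶ W)

lemma preadditiveCoyoneda_hom_ext {M : C ⥤ AddCommGrpCat.{v}} {W : C}
    {σ σ' : preadditiveCoyoneda.obj (op W) ⟶ M} (h : σ.app W (𝟙 W) = σ'.app W (𝟙 W)) :
    σ = σ' := by
  ext T (a : W ⟶ T)
  rw [preadditiveCoyoneda_hom_app σ, preadditiveCoyoneda_hom_app σ', h]

lemma preadditiveCoyoneda_map_comp_app_id {M : C ⥤ AddCommGrpCat.{v}} {X Y : C} (f : X ⟶ Y)
    (σ : preadditiveCoyoneda.obj (op X) ⟶ M) :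
    (preadditiveCoyoneda.map f.op ≫ σ).app Y (𝟙 Y) = M.map f (σ.app X (𝟙 X)) := by
  rw [← preadditiveCoyoneda_hom_app σ f]
  exact congrArg (σ.app Y) (Category.comp_id f)

def preadditiveCoyonedaEquiv (G : C ⥤ AddCommGrpCat.{v}) [G.Additive] (W : C) :
    (preadditiveCoyoneda.obj (op W) ⟶ G) ≃ G.obj W where
  toFun σ := σ.app W (𝟙 W)
  invFun t :=
    { app T := AddCommGrpCat.ofHom
        (AddMonoidHom.mk' (M := W ⟶ T) (fun a => G.map a t) (fun a b => by simp))
      naturality T T' u := by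
        ext (a : W ⟶ T)
        change G.map (a ≫ u) t = G.map u (G.map a t)
        simp }
  left_inv σ := preadditiveCoyoneda_hom_ext (by
    change G.map (𝟙 W) _ = _
    simp)
  right_inv t := by
    change G.map (𝟙 W) t = t
    simp

lemma preadditiveCoyoneda_shortComplex_exact_iff {G : C ⥤ AddCommGrpCat.{v}} {X Y : C}
    (f : X ⟶ Y) (α : preadditiveCoyoneda.obj (op X) ⟶ G) (w) :
    (ShortComplex.mk (preadditiveCoyoneda.map f.op) α w).Exact ↔
      ∀ (T : C) (m : X ⟶ T), G.map m (α.app X (𝟙 X)) = 0 → ∃ u : Y ⟶ T, f ≫ u = m := by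
  rw [ShortComplex.functor_ab_exact_iff]
  refine forall_congr' fun T => forall_congr' fun (m : X ⟶ T) => ?_
  rw [← preadditiveCoyoneda_hom_app α]
  rfl

end Preadditive

end CategoryTheory

variable {C}

open ZeroObject

lemma IsCoherent.additive {G : C ⥤ AddCommGrpCat.{v}} (hG : IsCoherent C G) : G.Additive := by
  obtain ⟨X, -, -, α, -, hα, -⟩ := hG
  exact Functor.additive_of_epi α

lemma IsCoherent.of_iso {G H : C ⥤ AddCommGrpCat.{v}} (hG : IsCoherent C G) (ψ : G ≅ H) :
    IsCoherent C H := by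
  obtain ⟨X, Y, f, α, w, hα, hex⟩ := hG
  refine ⟨X, Y, f, α ≫ ψ.hom, by rw [reassoc_of% w, zero_comp], epi_comp _ _, ?_⟩
  refine ShortComplex.exact_of_iso ?_ hex
  exact ShortComplex.isoMk (Iso.refl _) (Iso.refl _) ψ

lemma isCoherent_iff {G : C ⥤ AddCommGrpCat.{v}} [G.Additive] :
    IsCoherent C G ↔ ∃ (X Y : C) (f : X ⟶ Y) (ξ : G.obj X), G.map f ξ = 0 ∧
      (∀ (T : C) (y : G.obj T), ∃ m : X ⟶ T, G.map m ξ = y) ∧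
      ∀ (T : C) (m : X ⟶ T), G.map m ξ = 0 → ∃ u : Y ⟶ T, f ≫ u = m := by
  constructor
  · rintro ⟨X, Y, f, α, w, hα, hex⟩
    refine ⟨X, Y, f, α.app X (𝟙 X), ?_, fun T y => ?_,
      (preadditiveCoyoneda_shortComplex_exact_iff f α w).1 hex⟩
    · have h := congrArg (fun σ => σ.app Y (𝟙 Y)) w
      simp only [preadditiveCoyoneda_map_comp_app_id] at h
      exact h
    · obtain ⟨m, rfl⟩ := NatTrans.app_surjective_of_epi α T y
      exact ⟨m, (preadditiveCoyoneda_hom_app α m).symm⟩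
  · rintro ⟨X, Y, f, ξ, hf, hgen, hann⟩
    let α := (preadditiveCoyonedaEquiv G X).symm ξ
    have hαξ : α.app X (𝟙 X) = ξ := (preadditiveCoyonedaEquiv G X).apply_symm_apply ξ
    have w : preadditiveCoyoneda.map f.op ≫ α = 0 := preadditiveCoyoneda_hom_ext (by
      rw [preadditiveCoyoneda_map_comp_app_id, hαξ, hf]
      rfl)
    refine ⟨X, Y, f, α, w, ?_, (preadditiveCoyoneda_shortComplex_exact_iff f α w).2 (hαξ ▸ hann)⟩
    have (T : C) : Epi (α.app T) := (AddCommGrpCat.epi_iff_surjective _).2 fun y => by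
      obtain ⟨m, rfl⟩ := hgen T y
      exact ⟨m, rfl⟩
    exact NatTrans.epi_of_epi_app α

lemma isCoherent_preadditiveCoyoneda (X : C) :
    IsCoherent C (preadditiveCoyoneda.obj (op X)) :=
  isCoherent_iff.2 ⟨X, 0, 0, (𝟙 X : X ⟶ X), comp_zero,
    fun T (y : X ⟶ T) => ⟨y, Category.id_comp y⟩,
    fun _ m hm => ⟨0, comp_zero.trans ((Category.id_comp m).symm.trans hm).symm⟩⟩

lemma IsCoherent.cokernel_of_preadditiveCoyoneda {Z : C ⥤ AddCommGrpCat.{v}}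
    (hZ : IsCoherent C Z) {A : C} (γ : preadditiveCoyoneda.obj (op A) ⟶ Z) :
    IsCoherent C (cokernel γ) := by
  have := hZ.additive
  have := Functor.additive_of_epi (cokernel.π γ)
  obtain ⟨X, Y, f, ξ, hf, hgen, hann⟩ := isCoherent_iff.1 hZ
  obtain ⟨a, ha⟩ := hgen A (γ.app A (𝟙 A))
  have hγ {T : C} (u : A ⟶ T) : γ.app T u = Z.map (a ≫ u) ξ := by
    rw [preadditiveCoyoneda_hom_app γ, ← ha, Functor.map_comp]
    rfl
  have hcoker := (ShortComplex.functor_ab_exact_iff _).1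
    (ShortComplex.exact_of_g_is_cokernel (.mk _ _ (cokernel.condition γ)) (cokernelIsCokernel γ))
  set π := cokernel.π γ
  refine isCoherent_iff.2
    ⟨X, Y ⊞ A, biprod.lift f a, π.app X ξ, ?_, fun T y => ?_, fun T m hm => ?_⟩
  · have hlift : Z.map (biprod.lift f a) ξ = γ.app (Y ⊞ A) biprod.inr := by
      rw [hγ]
      simp [biprod.lift_eq, hf]
    rw [← NatTrans.naturality_apply, hlift]
    exact ConcreteCategory.congr_hom (NatTrans.congr_app (cokernel.condition γ) _) _
  · obtain ⟨z, rfl⟩ := NatTrans.app_surjective_of_epi π T y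
    obtain ⟨m, rfl⟩ := hgen T z
    exact ⟨m, (NatTrans.naturality_apply π m ξ).symm⟩
  · rw [← NatTrans.naturality_apply] at hm
    obtain ⟨u₂, hu₂⟩ := hcoker T _ hm
    change A ⟶ T at u₂
    rw [hγ] at hu₂
    obtain ⟨u₁, hu₁⟩ := hann T (m - a ≫ u₂) (by
      rw [Functor.map_sub]
      show Z.map m ξ - Z.map (a ≫ u₂) ξ = 0
      rw [hu₂, sub_self])
    exact ⟨biprod.desc u₁ u₂, by rw [biprod.lift_desc, hu₁, sub_add_cancel]⟩

lemma isCoherent_cokernel {G H : C ⥤ AddCommGrpCat.{v}} (hG : IsCoherent C G)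
    (hH : IsCoherent C H) (e : G ⟶ H) : IsCoherent C (cokernel e) := by
  obtain ⟨A, -, -, β, -, hβ, -⟩ := hG
  exact (hH.cokernel_of_preadditiveCoyoneda (β ≫ e)).of_iso (cokernelEpiComp β e)

instance : (ObjectProperty.ι (IsCoherent C)).PreservesEpimorphisms where
  preserves {G H} e _ := by
    let Q : Fp C := ⟨cokernel e.hom, isCoherent_cokernel G.property H.property e.hom⟩
    have hπ : (ObjectProperty.homMk (cokernel.π e.hom) : H ⟶ Q) = ObjectProperty.homMk 0 :=
      (cancel_epi e).1 (by ext1; simp)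
    exact Abelian.epi_of_cokernel_π_eq_zero _ (congrArg (·.hom) hπ)

lemma Fp.projective_preadditiveCoyoneda (W : C) :
    Projective (⟨_, isCoherent_preadditiveCoyoneda W⟩ : Fp C) where
  factors {E Z} f e _ := by
    have := E.property.additive
    have : Epi e.hom := (ObjectProperty.ι _).map_epi e
    obtain ⟨t, ht⟩ := NatTrans.app_surjective_of_epi e.hom W (f.hom.app W (𝟙 W))
    refine ⟨ObjectProperty.homMk ((preadditiveCoyonedaEquiv E.obj W).symm t), ?_⟩
    ext1
    refine preadditiveCoyoneda_hom_ext ?_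
    change e.hom.app W (E.obj.map (𝟙 W) t) = _
    simpa using ht

lemma Fp.projective_of_iso_preadditiveCoyoneda {F : Fp C} {W : C}
    (ψ : F.obj ≅ preadditiveCoyoneda.obj (op W)) : Projective F :=
  Projective.of_iso ((ObjectProperty.fullyFaithfulι (IsCoherent C)).preimageIso
    (X := F) (Y := ⟨_, isCoherent_preadditiveCoyoneda W⟩) ψ).symm
    (Fp.projective_preadditiveCoyoneda W)

lemma Fp.exists_iso_preadditiveCoyoneda_of_projective (F : Fp C) [Projective F] :
    ∃ W : C, Nonempty (F.obj ≅ preadditiveCoyoneda.obj (op W)) := by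
  obtain ⟨X, -, -, α, -, hα, -⟩ := F.property
  let α' : (⟨_, isCoherent_preadditiveCoyoneda X⟩ : Fp C) ⟶ F := ObjectProperty.homMk α
  have : Epi α' := (ObjectProperty.ι _).epi_of_epi_map hα
  let h : Retract F _ := ⟨Projective.factorThru (𝟙 F) α', α', by simp⟩
  obtain ⟨W, ⟨ψ⟩⟩ := preadditiveCoyoneda.exists_iso_obj_of_retract (h.map (ObjectProperty.ι _))
  exact ⟨W.unop, ⟨ψ⟩⟩

lemma IsCoherent.exists_iso_preadditiveCoyoneda_of_preservesFiniteLimits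
    {G : C ⥤ AddCommGrpCat.{v}} (hG : IsCoherent C G) [PreservesFiniteLimits G] :
    ∃ W : C, Nonempty (G ≅ preadditiveCoyoneda.obj (op W)) := by
  have := hG.additive
  obtain ⟨X, Y, f, ξ, hf, hgen, hann⟩ := isCoherent_iff.1 hG
  have hexact : (ShortComplex.mk _ _ (kernel.condition f)).Exact :=
    ShortComplex.exact_of_f_is_kernel _ (kernelIsKernel f)
  obtain ⟨η, hη⟩ := (ShortComplex.ab_exact_iff _).1
    (hexact.map_of_mono_of_preservesKernel G inferInstance inferInstance) ξ hf
  change G.obj (kernel f) at η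
  change G.map (kernel.ι f) η = ξ at hη
  let τ := (preadditiveCoyonedaEquiv G (kernel f)).symm η
  have hbij (T : C) : Function.Bijective (τ.app T) := by
    refine ⟨(injective_iff_map_eq_zero _).2 fun (a : kernel f ⟶ T) (ha : G.map a η = 0) => ?_,
      fun y => ?_⟩
    · have hj : G.map (pushout.inl (kernel.ι f) a) ξ = 0 := by
        rw [← hη, ← CategoryTheory.comp_apply, ← G.map_comp, pushout.condition, G.map_comp,
          CategoryTheory.comp_apply, ha, map_zero]
      obtain ⟨u, hu⟩ := hann _ _ hj
      refine zero_of_comp_mono (pushout.inr (kernel.ι f) a) ?_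
      rw [← pushout.condition, ← hu, kernel.condition_assoc, zero_comp]
    · obtain ⟨m, rfl⟩ := hgen T y
      refine ⟨kernel.ι f ≫ m, ?_⟩
      change G.map (kernel.ι f ≫ m) η = _
      rw [G.map_comp, CategoryTheory.comp_apply, hη]
  have (T : C) : IsIso (τ.app T) := (ConcreteCategory.isIso_iff_bijective _).2 (hbij T)
  have : IsIso τ := NatIso.isIso_of_isIso_app τ
  exact ⟨kernel f, ⟨(asIso τ).symm⟩⟩

/-- An object `F` of `fp(C, Ab)` is projective iff it is representable iff it is
left exact (here: preserves finite limits). -/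
theorem coherent_projective_iff_representable_iff_leftExact (F : Fp C) :
    (Projective F ↔ ∃ X : C, Nonempty (F.obj ≅ preadditiveCoyoneda.obj (op X))) ∧
    (Projective F ↔ Nonempty (PreservesFiniteLimits F.obj)) := by
  have hproj : Projective F ↔ ∃ X : C, Nonempty (F.obj ≅ preadditiveCoyoneda.obj (op X)) :=
    ⟨fun _ => F.exists_iso_preadditiveCoyoneda_of_projective,
      fun ⟨_, ⟨ψ⟩⟩ => Fp.projective_of_iso_preadditiveCoyoneda ψ⟩
  have hlex : Nonempty (PreservesFiniteLimits F.obj) ↔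
      ∃ X : C, Nonempty (F.obj ≅ preadditiveCoyoneda.obj (op X)) :=
    ⟨fun ⟨_⟩ => F.property.exists_iso_preadditiveCoyoneda_of_preservesFiniteLimits,
      fun ⟨_, ⟨ψ⟩⟩ => ⟨preservesFiniteLimits_of_natIso ψ.symm⟩⟩
  exact ⟨hproj, hproj.trans hlex.symm⟩
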